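/- Let D be a tournament missing disjoint paths of length 2 and let C = a_1b_1c_1, …, a_kb_kc_k be a double cycle in Δ(D). Then for every i ∈ {1,…,k}, in the induced subdigraph D[K(C)]: N⁺⁺(a_i) = N⁺⁺(c_i) and N⁻⁻(a_i) = N⁻⁻(c_i). -/

import Mathlib

/-!
Split each missing path `aᵢbᵢcᵢ` into two parts, its middle `{bᵢ}` and its ends `{aᵢ, cᵢ}`.
The four losing relations between consecutive paths force each part of path `m + 1` to beat a
whole part of path `m` with no path of length two back. Hence if some vertex of a part of path
`m` beats a vertex `u` lying outside path `m + 1`, a whole part of path `m + 1` beats `u`, and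
which part this is is governed by a sign attached to the step. Following the arcs into `bₘ`
once around the cycle shows that the signs have odd parity. Now if `u` lies on path `j ≠ i`,
is beaten by one end of path `i` and beats the other, propagating both arcs along the two arcs
of the cycle between `i` and `j` forces the parity to be even. So `aᵢ` and `cᵢ` are twins in
`D[K(C)]` apart from `bᵢ`, to which neither is joined, and twins have the same second
neighbourhoods.
-/

namespace SSNC

variable {V : Type*}

/-- The arc relation of an oriented graph: no digons (hence irreflexive). -/
def Oriented (A : V → V → Prop) : Prop := ∀ u v, A u v → ¬ A v u

/-- `u ∈ N⁺⁺(v)`: the second out-neighborhood. -/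
def SecondOut (A : V → V → Prop) (v u : V) : Prop :=
  u ≠ v ∧ ¬ A v u ∧ ∃ w, A v w ∧ A w u

/-- `{u, v}` is a missing edge of the digraph. -/
def IsMissing (A : V → V → Prop) (u v : V) : Prop :=
  u ≠ v ∧ ¬ A u v ∧ ¬ A v u

/-- The losing relation for a fixed labeling of the two pairs: `a→x`, `b→y`,
`y ∉ N⁺(a) ∪ N⁺⁺(a)` and `x ∉ N⁺(b) ∪ N⁺⁺(b)`. -/
def LosesOrd (A : V → V → Prop) (a b x y : V) : Prop :=
  A a x ∧ A b y ∧ ¬ A a y ∧ ¬ SecondOut A a y ∧ ¬ A b x ∧ ¬ SecondOut A b x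

/-- The missing edge `{a,b}` loses to the missing edge `{x,y}` (for some labeling). -/
def Loses (A : V → V → Prop) (a b x y : V) : Prop :=
  LosesOrd A a b x y ∨ LosesOrd A a b y x

/-- Degree of a vertex in the missing graph. -/
noncomputable def mdeg (A : V → V → Prop) (v : V) : ℕ :=
  ({w | IsMissing A v w} : Set V).ncard

/-- The missing graph, as a simple graph. -/
def missingGraph (A : V → V → Prop) : SimpleGraph V where
  Adj u v := IsMissing A u v
  symm := by
    constructor
    rintro u v ⟨h1, h2, h3⟩
    exact ⟨h1.symm, h3, h2⟩
  loopless := by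
    constructor
    rintro v ⟨h1, -, -⟩
    exact h1 rfl

/-- The missing graph is a vertex-disjoint union of paths
(equivalently: acyclic with maximum degree at most 2). -/
def MissingDisjointPaths (A : V → V → Prop) : Prop :=
  (missingGraph A).IsAcyclic ∧ ∀ v, mdeg A v ≤ 2

/-- The missing graph is a vertex-disjoint union of paths on exactly 3 vertices
(equivalently: every missing edge has one endpoint of missing-degree 1 and one of
missing-degree 2). -/
def MissingPaths2 (A : V → V → Prop) : Prop :=
  ∀ u v, IsMissing A u v →
    (mdeg A u = 1 ∧ mdeg A v = 2) ∨ (mdeg A u = 2 ∧ mdeg A v = 1)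

/-- The missing graph is a vertex-disjoint union of paths on 2 or 3 vertices. -/
def MissingPathsLe2 (A : V → V → Prop) : Prop :=
  ∀ u v, IsMissing A u v →
    (mdeg A u = 1 ∧ mdeg A v = 1) ∨ (mdeg A u = 1 ∧ mdeg A v = 2) ∨
    (mdeg A u = 2 ∧ mdeg A v = 1)

/-- Out-degree of the missing edge `{u,v}` in the dependency digraph `Δ(D)`:
the number of missing edges it loses to. -/
noncomputable def outDegDelta (A : V → V → Prop) (u v : V) : ℕ :=
  ({f : Sym2 V | ∃ x y, f = s(x, y) ∧ IsMissing A x y ∧ Loses A u v x y}).ncard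

/-- In-degree of the missing edge `{u,v}` in the dependency digraph `Δ(D)`:
the number of missing edges losing to it. -/
noncomputable def inDegDelta (A : V → V → Prop) (u v : V) : ℕ :=
  ({f : Sym2 V | ∃ x y, f = s(x, y) ∧ IsMissing A x y ∧ Loses A x y u v}).ncard

/-- `C = a₁b₁c₁, …, a_k b_k c_k` is a double cycle in `Δ(D)`: pairwise vertex-disjoint
missing paths of length 2 (`k ≥ 2`), where each of `{aᵢ,bᵢ}, {bᵢ,cᵢ}` loses to each of
`{aᵢ₊₁,bᵢ₊₁}, {bᵢ₊₁,cᵢ₊₁}` (indices modulo `k`). -/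
def IsDoubleCycle (A : V → V → Prop) (k : ℕ) (a b c : ZMod k → V) : Prop :=
  2 ≤ k ∧
  (∀ i, IsMissing A (a i) (b i) ∧ IsMissing A (b i) (c i) ∧ a i ≠ c i) ∧
  (∀ i j, i ≠ j → Disjoint ({a i, b i, c i} : Set V) {a j, b j, c j}) ∧
  (∀ i, Loses A (a i) (b i) (a (i + 1)) (b (i + 1)) ∧
        Loses A (a i) (b i) (b (i + 1)) (c (i + 1)) ∧
        Loses A (b i) (c i) (a (i + 1)) (b (i + 1)) ∧
        Loses A (b i) (c i) (b (i + 1)) (c (i + 1)))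

/-- `K(C)` for a double cycle `C`. -/
def Kset {k : ℕ} (a b c : ZMod k → V) : Set V :=
  {v | ∃ i, v = a i ∨ v = b i ∨ v = c i}

/-- Out-neighborhood in the subdigraph induced on `K`. -/
def outIn (A : V → V → Prop) (K : Set V) (v : V) : Set V := {u | u ∈ K ∧ A v u}

/-- In-neighborhood in the subdigraph induced on `K`. -/
def inIn (A : V → V → Prop) (K : Set V) (v : V) : Set V := {u | u ∈ K ∧ A u v}

/-- Second out-neighborhood in the subdigraph induced on `K`. -/
def secondOutIn (A : V → V → Prop) (K : Set V) (v : V) : Set V :=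
  {u | u ∈ K ∧ u ≠ v ∧ ¬ A v u ∧ ∃ w ∈ K, A v w ∧ A w u}

/-- Second in-neighborhood in the subdigraph induced on `K`. -/
def secondInIn (A : V → V → Prop) (K : Set V) (v : V) : Set V :=
  {u | u ∈ K ∧ u ≠ v ∧ ¬ A u v ∧ ∃ w ∈ K, A u w ∧ A w v}

variable {A : V → V → Prop}

lemma IsMissing.symm {u v : V} (h : IsMissing A u v) : IsMissing A v u :=
  ⟨h.1.symm, h.2.2, h.2.1⟩

lemma missing_nbhds_of_path [Finite V] (hP : MissingPaths2 A) {x y z : V}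
    (hxy : IsMissing A x y) (hyz : IsMissing A y z) (hxz : x ≠ z) :
    {w | IsMissing A x w} = {y} ∧ {w | IsMissing A y w} = {x, z} ∧
      {w | IsMissing A z w} = {y} := by
  have hsub : ({x, z} : Set V) ⊆ {w | IsMissing A y w} := by
    rintro w (rfl | rfl)
    exacts [hxy.symm, hyz]
  have hy : 2 ≤ mdeg A y :=
    (Set.ncard_pair hxz).symm.le.trans (Set.ncard_le_ncard hsub (Set.toFinite _))
  have hx : mdeg A x = 1 ∧ mdeg A y = 2 := by rcases hP x y hxy with h | h <;> omega
  have hz : mdeg A z = 1 := by rcases hP y z hyz with h | h <;> omega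
  refine ⟨?_, ?_, ?_⟩
  · exact (Set.eq_of_subset_of_ncard_le (by simpa using hxy)
      (hx.1.le.trans (Set.ncard_singleton y).ge) (Set.toFinite _)).symm
  · exact (Set.eq_of_subset_of_ncard_le hsub
      (hx.2.le.trans (Set.ncard_pair hxz).ge) (Set.toFinite _)).symm
  · exact (Set.eq_of_subset_of_ncard_le (by simpa using hyz.symm)
      (hz.le.trans (Set.ncard_singleton y).ge) (Set.toFinite _)).symm

lemma mem_of_isMissing_of_path [Finite V] (hP : MissingPaths2 A) {x y z u v : V}
    (hxy : IsMissing A x y) (hyz : IsMissing A y z) (hxz : x ≠ z)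
    (hu : u ∈ ({x, y, z} : Set V)) (huv : IsMissing A u v) : v ∈ ({x, y, z} : Set V) := by
  obtain ⟨hx, hy, hz⟩ := missing_nbhds_of_path hP hxy hyz hxz
  have hv : v ∈ {w | IsMissing A u w} := huv
  rcases hu with rfl | rfl | rfl
  · rw [hx] at hv; simp_all
  · rw [hy] at hv; rcases hv with rfl | rfl <;> simp
  · rw [hz] at hv; simp_all

variable {k : ℕ}

/-- The middle vertex (`τ = true`) or the two ends (`τ = false`) of the `i`-th path. -/
def part (a b c : ZMod k → V) (i : ZMod k) (τ : Bool) : Set V :=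
  if τ then {b i} else {a i, c i}

variable {a b c : ZMod k → V}

lemma part_nonempty (i : ZMod k) (τ : Bool) : (part a b c i τ).Nonempty := by
  cases τ <;> simp [part]

lemma exists_mem_part_iff {i : ZMod k} {u : V} :
    (∃ τ, u ∈ part a b c i τ) ↔ u ∈ ({a i, b i, c i} : Set V) := by
  constructor
  · rintro ⟨_ | _, hu⟩ <;> simp only [part] at hu <;> aesop
  · rintro (rfl | rfl | rfl)
    exacts [⟨false, by simp [part]⟩, ⟨true, by simp [part]⟩, ⟨false, by simp [part]⟩]

lemma add_natCast_ne (i : ZMod k) {l d : ℕ} (hl : l < d) (hd : d < k) :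
    i + (l : ZMod k) ≠ i + d := by
  intro h
  have := (ZMod.natCast_eq_natCast_iff' l d k).1 (add_left_cancel h)
  rw [Nat.mod_eq_of_lt (hl.trans hd), Nat.mod_eq_of_lt hd] at this
  omega

variable (A a b c) in
def PathsJoined : Prop :=
  ∀ i j, i ≠ j → ∀ τ σ, ∀ u ∈ part a b c i τ, ∀ v ∈ part a b c j σ, u ≠ v ∧ (A u v ∨ A v u)

lemma pathsJoined_of_missingPaths2 [Finite V] (hP : MissingPaths2 A)
    (hpath : ∀ i, IsMissing A (a i) (b i) ∧ IsMissing A (b i) (c i) ∧ a i ≠ c i)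
    (hdisj : ∀ i j, i ≠ j → Disjoint ({a i, b i, c i} : Set V) {a j, b j, c j}) :
    PathsJoined A a b c := by
  intro i j hij τ σ u hu v hv
  have hu' := exists_mem_part_iff.1 ⟨τ, hu⟩
  have hv' := exists_mem_part_iff.1 ⟨σ, hv⟩
  have huv : u ≠ v := by
    rintro rfl
    exact Set.disjoint_left.1 (hdisj i j hij) hu' hv'
  refine ⟨huv, ?_⟩
  by_contra hnot
  obtain ⟨hab, hbc, hac⟩ := hpath i
  have hmiss : IsMissing A u v := ⟨huv, fun h => hnot (.inl h), fun h => hnot (.inr h)⟩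
  exact Set.disjoint_left.1 (hdisj i j hij) (mem_of_isMissing_of_path hP hab hbc hac hu' hmiss) hv'

variable (A a b c) in
def SignedSteps (s : ZMod k → Bool) : Prop :=
  ∀ m ρ, ∀ v ∈ part a b c (m + 1) ρ, ∀ w ∈ part a b c m (xor ρ (s m)),
    A v w ∧ ∀ x, A w x → ¬ A x v

lemma exists_sign_of_loses (hjoin : PathsJoined A a b c) {m : ZMod k} (hm : m ≠ m + 1)
    (h₁ : Loses A (a m) (b m) (a (m + 1)) (b (m + 1)))
    (h₂ : Loses A (a m) (b m) (b (m + 1)) (c (m + 1)))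
    (h₃ : Loses A (b m) (c m) (a (m + 1)) (b (m + 1)))
    (h₄ : Loses A (b m) (c m) (b (m + 1)) (c (m + 1))) :
    ∃ σ, ∀ ρ, ∀ v ∈ part a b c (m + 1) ρ, ∀ w ∈ part a b c m (xor ρ σ),
      A v w ∧ ∀ x, A w x → ¬ A x v := by
  suffices ∃ σ, ∀ ρ, ∀ v ∈ part a b c (m + 1) ρ, ∀ w ∈ part a b c m (xor ρ σ),
      ¬ A w v ∧ ¬ SecondOut A w v by
    obtain ⟨σ, hσ⟩ := this
    refine ⟨σ, fun ρ v hv w hw => ?_⟩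
    obtain ⟨hwv, hadj⟩ := hjoin m (m + 1) hm _ _ w hw v hv
    obtain ⟨hnot, hnot₂⟩ := hσ ρ v hv w hw
    exact ⟨hadj.resolve_left hnot, fun x hwx hxv => hnot₂ ⟨hwv.symm, hnot, x, hwx, hxv⟩⟩
  unfold Loses LosesOrd at h₁ h₂ h₃ h₄
  -- Once the arc between the middles is fixed, only one labeling of each relation survives.
  by_cases hb : A (b m) (b (m + 1))
  · refine ⟨true, ?_⟩
    rintro (_ | _) v hv w hw <;> simp only [part] at hv hw <;> aesop
  · refine ⟨false, ?_⟩
    rintro (_ | _) v hv w hw <;> simp only [part] at hv hw <;> aesop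

lemma exists_signedSteps (hk : 2 ≤ k) (hjoin : PathsJoined A a b c)
    (hlose : ∀ i, Loses A (a i) (b i) (a (i + 1)) (b (i + 1)) ∧
      Loses A (a i) (b i) (b (i + 1)) (c (i + 1)) ∧
      Loses A (b i) (c i) (a (i + 1)) (b (i + 1)) ∧
      Loses A (b i) (c i) (b (i + 1)) (c (i + 1))) :
    ∃ s, SignedSteps A a b c s := by
  have hm (m : ZMod k) : m ≠ m + 1 := by
    simpa using add_natCast_ne m (show 0 < 1 by omega) (show 1 < k by omega)
  choose s hs using fun m =>
    exists_sign_of_loses hjoin (hm m) (hlose m).1 (hlose m).2.1 (hlose m).2.2.1 (hlose m).2.2.2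
  exact ⟨s, hs⟩

def parity (s : ZMod k → Bool) (m : ZMod k) : ℕ → Bool
  | 0 => false
  | n + 1 => xor (s m) (parity s (m + 1) n)

lemma parity_add (s : ZMod k → Bool) (m : ZMod k) (d e : ℕ) :
    parity s m (d + e) = xor (parity s m d) (parity s (m + d) e) := by
  induction d generalizing m with
  | zero => simp [parity]
  | succ d ih =>
    rw [Nat.add_right_comm, parity, ih, parity, Bool.xor_assoc, Nat.cast_succ, add_assoc,
      add_comm 1 (d : ZMod k)]

section Chain

variable {s : ZMod k → Bool} (hst : SignedSteps A a b c s) (hjoin : PathsJoined A a b c)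
include hst hjoin

lemma exists_beats_succ {m j : ZMod k} {τ γ : Bool} {u : V}
    (hu : u ∈ part a b c j γ) (hj : m + 1 ≠ j) (h : ∃ w ∈ part a b c m τ, A w u) :
    ∃ v ∈ part a b c (m + 1) (xor τ (s m)), A v u := by
  obtain ⟨w, hw, hwu⟩ := h
  obtain ⟨v, hv⟩ := part_nonempty (a := a) (b := b) (c := c) (m + 1) (xor τ (s m))
  have hw' : w ∈ part a b c m (xor (xor τ (s m)) (s m)) := by simpa using hw
  have huv : ¬ A u v := (hst m _ v hv w hw').2 u hwu
  exact ⟨v, hv, ((hjoin _ _ hj.symm _ _ u hu v hv).2).resolve_left huv⟩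

lemma exists_beats_add {j : ZMod k} {γ : Bool} {u : V}
    (hu : u ∈ part a b c j γ) (n : ℕ) :
    ∀ (m : ZMod k) (τ : Bool), (∀ l < n, m + (l + 1 : ℕ) ≠ j) →
      (∃ w ∈ part a b c m τ, A w u) → ∃ v ∈ part a b c (m + n) (xor τ (parity s m n)), A v u := by
  induction n with
  | zero => simp [parity]
  | succ n ih =>
    intro m τ hj h
    have h₁ := exists_beats_succ hst hjoin hu (by simpa using hj 0 n.succ_pos) h
    have h₂ := ih (m + 1) _ (fun l hl => by
      convert hj (l + 1) (by omega) using 1; push_cast; ring) h₁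
    have hpos : m + ((n + 1 : ℕ) : ZMod k) = m + 1 + n := by push_cast; ring
    rwa [hpos, parity, ← Bool.xor_assoc]

lemma xor_parity_eq_not_of_beats (hA : Oriented A) {i : ZMod k} {d : ℕ} (hd : 0 < d)
    (hdk : d < k) {τ γ : Bool} {x u : V} (hx : x ∈ part a b c i τ)
    (hu : u ∈ part a b c (i + d) γ) (hxu : A x u) :
    xor τ (parity s i d) = !γ := by
  obtain ⟨e, rfl⟩ : ∃ e, d = e + 1 := ⟨d - 1, by omega⟩
  obtain ⟨v, hv, hvu⟩ := exists_beats_add hst hjoin hu e i τ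
    (fun l hl => add_natCast_ne i (by omega) hdk) ⟨x, hx, hxu⟩
  have hu' : u ∈ part a b c (i + e + 1) γ := by rwa [Nat.cast_succ, ← add_assoc] at hu
  have hne : xor τ (parity s i e) ≠ xor γ (s (i + e)) := fun h =>
    hA _ _ hvu (hst _ γ u hu' v (h ▸ hv)).1
  rw [parity_add, parity, parity]
  revert hne
  cases τ <;> cases γ <;> cases parity s i e <;> cases s (i + e) <;> decide

lemma parity_eq_true (hA : Oriented A) (hk : 2 ≤ k) (m : ZMod k) : parity s m k = true := by
  obtain ⟨v, hv⟩ := part_nonempty (a := a) (b := b) (c := c) (m + 1) (!s m)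
  have hvb : A v (b m) := (hst m _ v hv (b m) (by simp [part])).1
  have hpos : m + 1 + ((k - 1 : ℕ) : ZMod k) = m := by
    rw [Nat.cast_sub (by omega), ZMod.natCast_self]; ring
  have hbm : b m ∈ part a b c (m + 1 + ((k - 1 : ℕ) : ZMod k)) true := by
    rw [hpos]; simp [part]
  have h := xor_parity_eq_not_of_beats hst hjoin hA (by omega) (by omega) hv hbm hvb
  have e : parity s m (k - 1 + 1) = true := by
    rw [parity]
    revert h
    cases s m <;> cases parity s (m + 1) (k - 1) <;> decide
  rwa [Nat.sub_add_cancel (by omega)] at e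

lemma not_beats_of_beats (hA : Oriented A) (hk : 2 ≤ k) {i j : ZMod k} (hij : i ≠ j)
    {τ γ : Bool} {x y u : V} (hx : x ∈ part a b c i τ) (hy : y ∈ part a b c i τ)
    (hu : u ∈ part a b c j γ) (hxu : A x u) : ¬ A u y := by
  intro huy
  have : NeZero k := ⟨by omega⟩
  set d := (j - i).val with hd
  have hdk : d < k := ZMod.val_lt _
  have hd0 : 0 < d := Nat.pos_of_ne_zero fun h =>
    hij (sub_eq_zero.1 ((ZMod.val_eq_zero _).1 h)).symm
  have hj : j = i + d := by rw [hd, ZMod.natCast_zmod_val]; ring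
  have hi : i = j + ((k - d : ℕ) : ZMod k) := by
    rw [Nat.cast_sub hdk.le, ZMod.natCast_self, hj]; ring
  have h₁ := xor_parity_eq_not_of_beats hst hjoin hA hd0 hdk hx (hj ▸ hu) hxu
  have h₂ := xor_parity_eq_not_of_beats hst hjoin hA (by omega) (by omega) hu (hi ▸ hy) huy
  have h₃ : parity s i (d + (k - d)) = true := by
    rw [Nat.add_sub_cancel' hdk.le]
    exact parity_eq_true hst hjoin hA hk i
  rw [parity_add, ← hj] at h₃
  revert h₁ h₂ h₃
  cases τ <;> cases γ <;> cases parity s i d <;> cases parity s j (k - d) <;> decide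

lemma twins_of_mem_part (hA : Oriented A) (hk : 2 ≤ k) {i j : ZMod k} (hij : i ≠ j)
    {τ γ : Bool} {x y u : V} (hx : x ∈ part a b c i τ) (hy : y ∈ part a b c i τ)
    (hu : u ∈ part a b c j γ) : (A x u ↔ A y u) ∧ (A u x ↔ A u y) := by
  have hxu := (hjoin i j hij τ γ x hx u hu).2
  have hyu := (hjoin i j hij τ γ y hy u hu).2
  have hxy := not_beats_of_beats hst hjoin hA hk hij hx hy hu
  have hyx := not_beats_of_beats hst hjoin hA hk hij hy hx hu
  tauto

end Chain

lemma secondOutIn_subset_of_twins (hA : Oriented A) {K : Set V} {x y z : V}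
    (hxz : ¬ A x z) (hyz : ¬ A y z)
    (htw : ∀ u ∈ K, u ≠ x → u ≠ y → u ≠ z → (A x u ↔ A y u) ∧ (A u x ↔ A u y)) :
    secondOutIn A K x ⊆ secondOutIn A K y := by
  rintro u ⟨huK, hux, hxu, w, hwK, hxw, hwu⟩
  have hwx : w ≠ x := by rintro rfl; exact hA _ _ hxw hxw
  have hwz : w ≠ z := by rintro rfl; exact hxz hxw
  have hwy : w ≠ y := by
    rintro rfl
    have huy : u ≠ w := by rintro rfl; exact hA _ _ hwu hwu
    have huz : u ≠ z := by rintro rfl; exact hyz hwu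
    exact hxu ((htw u huK hux huy huz).1.2 hwu)
  have htww := htw w hwK hwx hwy hwz
  have huy : u ≠ y := by
    rintro rfl
    exact hA _ _ hxw (htww.2.2 hwu)
  have hyu : ¬ A y u := by
    by_cases huz : u = z
    · rwa [huz]
    · exact fun h => hxu ((htw u huK hux huy huz).1.2 h)
  exact ⟨huK, huy, hyu, w, hwK, htww.1.1 hxw, hwu⟩

lemma secondOutIn_eq_of_twins (hA : Oriented A) {K : Set V} {x y z : V}
    (hxz : ¬ A x z) (hyz : ¬ A y z)
    (htw : ∀ u ∈ K, u ≠ x → u ≠ y → u ≠ z → (A x u ↔ A y u) ∧ (A u x ↔ A u y)) :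
    secondOutIn A K x = secondOutIn A K y :=
  (secondOutIn_subset_of_twins hA hxz hyz htw).antisymm <|
    secondOutIn_subset_of_twins hA hyz hxz fun u hu hy hx hz =>
      ⟨(htw u hu hx hy hz).1.symm, (htw u hu hx hy hz).2.symm⟩

lemma secondInIn_eq_secondOutIn_swap (K : Set V) (v : V) :
    secondInIn A K v = secondOutIn (fun p q => A q p) K v := by
  ext u
  constructor <;> rintro ⟨h₁, h₂, h₃, w, h₄, h₅, h₆⟩ <;> exact ⟨h₁, h₂, h₃, w, h₄, h₆, h₅⟩

lemma secondInIn_eq_of_twins (hA : Oriented A) {K : Set V} {x y z : V}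
    (hzx : ¬ A z x) (hzy : ¬ A z y)
    (htw : ∀ u ∈ K, u ≠ x → u ≠ y → u ≠ z → (A x u ↔ A y u) ∧ (A u x ↔ A u y)) :
    secondInIn A K x = secondInIn A K y := by
  rw [secondInIn_eq_secondOutIn_swap, secondInIn_eq_secondOutIn_swap]
  exact secondOutIn_eq_of_twins (fun u v h h' => hA v u h h') hzx hzy
    fun u hu hx hy hz => (htw u hu hx hy hz).symm

/-- Lemma 4.9: `aᵢ` and `cᵢ` have the same second neighborhoods in `D[K(C)]`. -/
theorem stmt8 {V : Type*} [Fintype V] (A : V → V → Prop) (hA : Oriented A)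
    (hP : MissingPaths2 A) (k : ℕ) (a b c : ZMod k → V)
    (hC : IsDoubleCycle A k a b c) (K : Set V) (hK : K = Kset a b c) :
    ∀ i, secondOutIn A K (a i) = secondOutIn A K (c i) ∧
         secondInIn A K (a i) = secondInIn A K (c i) := by
  obtain ⟨hk, hpath, hdisj, hlose⟩ := hC
  have hjoin := pathsJoined_of_missingPaths2 hP hpath hdisj
  obtain ⟨s, hst⟩ := exists_signedSteps hk hjoin hlose
  intro i
  obtain ⟨hab, hbc, -⟩ := hpath i
  have htw : ∀ u ∈ K, u ≠ a i → u ≠ c i → u ≠ b i →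
      (A (a i) u ↔ A (c i) u) ∧ (A u (a i) ↔ A u (c i)) := by
    rintro u hu hua huc hub
    rw [hK] at hu
    obtain ⟨j, hj⟩ := hu
    obtain ⟨γ, hγ⟩ := exists_mem_part_iff.2 hj
    have hij : i ≠ j := by
      rintro rfl
      rcases hj with rfl | rfl | rfl <;> contradiction
    exact twins_of_mem_part hst hjoin hA hk hij (τ := false) (by simp [part]) (by simp [part]) hγ
  exact ⟨secondOutIn_eq_of_twins hA hab.2.1 hbc.2.2 htw,
    secondInIn_eq_of_twins hA hab.2.2 hbc.2.1 htw⟩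

end SSNC
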